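/- Lower bound half of the norm limit: under the assumptions above (|Ω|<∞, 1/c ≤ φ_n(x,1) ≤ c, (aInc)_{p_n} with uniform constant L, p_n → ∞), for every u ∈ L^∞(Ω) one has liminf_{n→∞} ‖u‖_{φ_n} ≥ ‖u‖_∞, since ‖u‖_{L^{p_n}} ≤ (2L(|Ω|+c))^{1/p_n} ‖u‖_{φ_n} and ‖u‖_{L^{p_n}} → ‖u‖_∞. -/

import Mathlib

open MeasureTheory Set Filter Topology ENNReal

/-- The modular `ρ_φ(f) = ∫_Ω φ(x,|f(x)|) dx` of a generalized Orlicz space. -/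
noncomputable def gModular {N : ℕ} (Ω : Set (Fin N → ℝ))
    (φ : (Fin N → ℝ) → ℝ → ℝ≥0∞) (f : (Fin N → ℝ) → ℝ) : ℝ≥0∞ :=
  ∫⁻ x in Ω, φ x |f x|

/-- The Luxemburg quasinorm `‖f‖_φ = inf{λ > 0 : ρ_φ(f/λ) ≤ 1}` (with value `∞` if no
such `λ` exists). -/
noncomputable def luxNorm {N : ℕ} (Ω : Set (Fin N → ℝ))
    (φ : (Fin N → ℝ) → ℝ → ℝ≥0∞) (f : (Fin N → ℝ) → ℝ) : ℝ≥0∞ :=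
  sInf (ENNReal.ofReal '' {l : ℝ | 0 < l ∧ gModular Ω φ (fun x => f x / l) ≤ 1})

/-- `φ` is a generalized weak Φ-function on `Ω`: measurability of `x ↦ φ(x,|f(x)|)`,
`φ(x,0) = 0`, `lim_{t→0⁺} φ(x,t) = 0`, `lim_{t→∞} φ(x,t) = ∞`, `t ↦ φ(x,t)` increasing,
and `(aInc)₁` with some constant `L ≥ 1`. -/
def IsWeakPhi {N : ℕ} (Ω : Set (Fin N → ℝ)) (φ : (Fin N → ℝ) → ℝ → ℝ≥0∞) : Prop :=
  (∀ f : (Fin N → ℝ) → ℝ, Measurable f → Measurable fun x => φ x |f x|) ∧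
  (∀ᵐ x ∂(volume.restrict Ω),
      φ x 0 = 0 ∧ Tendsto (φ x) (nhdsWithin 0 (Ioi 0)) (nhds 0) ∧
      Tendsto (φ x) atTop (nhds ⊤) ∧ MonotoneOn (φ x) (Ici 0)) ∧
  (∃ L : ℝ, 1 ≤ L ∧ ∀ᵐ x ∂(volume.restrict Ω), ∀ t, 0 ≤ t → ∀ l, 0 ≤ l → l ≤ 1 →
      φ x (l * t) ≤ ENNReal.ofReal (L * l) * φ x t)

/-! Fix `0 < r < t < ‖u‖_∞`, so that `S = {t ≤ |u|}` has positive measure, and let `λ < r`.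
On `S` we have
`|u/λ| ≥ t/λ ≥ 1`, and `(aInc)_p` applied between `1` and `|u/λ|` gives
`φ(x,|u/λ|) ≥ |u/λ|^p φ(x,1) / L ≥ (t/r)^p / (L c)`. Hence `ρ_φ(u/λ) ≥ (t/r)^p |S| / (L c)`,
which exceeds `1` once `p` is large, so such `λ` is not admissible and `‖u‖_{φ_n} ≥ r` for
all large `n`. Letting `r ↑ ‖u‖_∞` gives the claim. -/

/-- The condition `(aInc)_p` with constant `L`, i.e. `t ↦ f(t)/t^p` is `L`-almost increasing. -/
def AInc (f : ℝ → ℝ≥0∞) (p L : ℝ) : Prop :=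
  ∀ t, 0 ≤ t → ∀ l, 0 ≤ l → l ≤ 1 → f (l * t) ≤ ENNReal.ofReal (L * l ^ p) * f t

theorem AInc.ofReal_rpow_div_mul_le {f : ℝ → ℝ≥0∞} {p L s : ℝ} (hf : AInc f p L)
    (hL : 0 < L) (hs : 1 ≤ s) : ENNReal.ofReal (s ^ p / L) * f 1 ≤ f s := by
  have hs0 : 0 < s := one_pos.trans_le hs
  have h1 : f 1 ≤ ENNReal.ofReal (L * s⁻¹ ^ p) * f s := by
    simpa [inv_mul_cancel₀ hs0.ne'] using
      hf s hs0.le s⁻¹ (inv_nonneg.mpr hs0.le) (inv_le_one_of_one_le₀ hs)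
  have hcancel : s ^ p / L * (L * s⁻¹ ^ p) = 1 := by
    rw [Real.inv_rpow hs0.le]
    field_simp [(Real.rpow_pos_of_pos hs0 p).ne']
  calc ENNReal.ofReal (s ^ p / L) * f 1
      ≤ ENNReal.ofReal (s ^ p / L) * (ENNReal.ofReal (L * s⁻¹ ^ p) * f s) := by gcongr
    _ = f s := by
      rw [← mul_assoc, ← ENNReal.ofReal_mul (by positivity), hcancel, ENNReal.ofReal_one,
        one_mul]

section Modular

variable {N : ℕ} {Ω : Set (Fin N → ℝ)} {φ : (Fin N → ℝ) → ℝ → ℝ≥0∞}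

theorem ofReal_rpow_div_mul_meas_le_gModular {f : (Fin N → ℝ) → ℝ} {p L s : ℝ} {a : ℝ≥0∞}
    (hφf : Measurable fun x => φ x |f x|) (hinc : ∀ᵐ x ∂volume.restrict Ω, AInc (φ x) p L)
    (hone : ∀ᵐ x ∂volume.restrict Ω, a ≤ φ x 1) (hL : 0 < L) (hp : 0 ≤ p) (hs : 1 ≤ s) :
    ENNReal.ofReal (s ^ p / L) * (a * volume.restrict Ω {x | s ≤ |f x|})
      ≤ gModular Ω φ f := by
  set ε := ENNReal.ofReal (s ^ p / L) * a
  have hsub : {x | s ≤ |f x|} ≤ᵐ[volume.restrict Ω] {x | ε ≤ φ x |f x|} := by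
    filter_upwards [hinc, hone] with x hx hx1 hxs
    calc ε ≤ ENNReal.ofReal (|f x| ^ p / L) * φ x 1 := by
          refine mul_le_mul' (ENNReal.ofReal_le_ofReal ?_) hx1
          gcongr
          exact hxs
      _ ≤ φ x |f x| := hx.ofReal_rpow_div_mul_le hL (hs.trans hxs)
  calc ENNReal.ofReal (s ^ p / L) * (a * volume.restrict Ω {x | s ≤ |f x|})
      ≤ ε * volume.restrict Ω {x | ε ≤ φ x |f x|} := by
        rw [← mul_assoc]
        exact mul_le_mul_right (measure_mono_ae hsub) ε
    _ ≤ gModular Ω φ f := mul_meas_ge_le_lintegral₀ hφf.aemeasurable ε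

theorem ofReal_le_luxNorm {f : (Fin N → ℝ) → ℝ} {r : ℝ}
    (h : ∀ l, 0 < l → l < r → 1 < gModular Ω φ (fun x => f x / l)) :
    ENNReal.ofReal r ≤ luxNorm Ω φ f := by
  refine le_sInf ?_
  rintro _ ⟨l, ⟨hl, hmod⟩, rfl⟩
  refine ENNReal.ofReal_le_ofReal (le_of_not_gt fun hlr => ?_)
  exact (h l hl hlr).not_ge hmod

theorem ofReal_le_luxNorm_of_one_lt {u : (Fin N → ℝ) → ℝ} {p L r t : ℝ} {a : ℝ≥0∞}
    (hφ : ∀ f : (Fin N → ℝ) → ℝ, Measurable f → Measurable fun x => φ x |f x|)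
    (hinc : ∀ᵐ x ∂volume.restrict Ω, AInc (φ x) p L)
    (hone : ∀ᵐ x ∂volume.restrict Ω, a ≤ φ x 1) (hL : 0 < L) (hp : 0 ≤ p)
    (hu : Measurable u) (hr : 0 < r) (hrt : r < t)
    (hlarge : 1 < ENNReal.ofReal ((t / r) ^ p / L) * (a * volume.restrict Ω {x | t ≤ |u x|})) :
    ENNReal.ofReal r ≤ luxNorm Ω φ u := by
  refine ofReal_le_luxNorm fun l hl hlr => hlarge.trans_le ?_
  have hscale : {x | t ≤ |u x|} = {x | t / l ≤ |u x / l|} := by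
    ext x
    simp only [mem_ofPred_eq, abs_div, abs_of_pos hl, div_le_div_iff_of_pos_right hl]
  have hpow : (t / r) ^ p ≤ (t / l) ^ p :=
    Real.rpow_le_rpow (div_pos (hr.trans hrt) hr).le
      (div_le_div_of_nonneg_left (hr.trans hrt).le hl hlr.le) hp
  calc ENNReal.ofReal ((t / r) ^ p / L) * (a * volume.restrict Ω {x | t ≤ |u x|})
      ≤ ENNReal.ofReal ((t / l) ^ p / L) * (a * volume.restrict Ω {x | t / l ≤ |u x / l|}) := by
        rw [hscale]
        gcongr
    _ ≤ gModular Ω φ (fun x => u x / l) :=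
        ofReal_rpow_div_mul_meas_le_gModular (hφ _ (hu.div_const l)) hinc hone hL hp
          ((one_le_div hl).mpr (hlr.trans hrt).le)

end Modular

theorem meas_le_abs_pos_of_lt_eLpNorm_top {α : Type*} [MeasurableSpace α] {μ : Measure α}
    {u : α → ℝ} {t : ℝ} (ht : ENNReal.ofReal t < eLpNorm u ⊤ μ) :
    0 < μ {x | t ≤ |u x|} := by
  refine pos_iff_ne_zero.mpr fun h0 => ht.not_ge ?_
  have hbound : ∀ᵐ x ∂μ, ‖u x‖ ≤ t := by
    rw [ae_iff]
    exact measure_mono_null (fun x hx => (not_le.mp hx).le) h0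
  rw [eLpNorm_exponent_top]
  exact eLpNormEssSup_le_of_ae_bound hbound

theorem tendsto_ofReal_rpow_div_mul_atTop_top {ι : Type*} {l : Filter ι} {p : ι → ℝ}
    {q L : ℝ} {K : ℝ≥0∞} (hq : 1 < q) (hp : Tendsto p l atTop) (hL : 0 < L) (hK : K ≠ 0) :
    Tendsto (fun i => ENNReal.ofReal (q ^ p i / L) * K) l (𝓝 ⊤) := by
  have hpow := ((tendsto_rpow_atTop_of_base_gt_one q hq).comp hp).atTop_div_const hL
  rw [← ENNReal.top_mul hK]
  exact ENNReal.Tendsto.mul_const (ENNReal.tendsto_ofReal_atTop.comp hpow)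
    (Or.inl ENNReal.top_ne_zero)

theorem luxNorm_liminf_ge_general {N : ℕ} (Ω : Set (Fin N → ℝ))
    (φ : ℕ → (Fin N → ℝ) → ℝ → ℝ≥0∞) (hφ : ∀ n, IsWeakPhi Ω (φ n))
    (c L : ℝ) (hc : 1 ≤ c) (hL : 1 ≤ L) (p : ℕ → ℝ) (hp : ∀ n, 1 ≤ p n)
    (hptop : Tendsto p atTop atTop)
    (hanch : ∀ n, ∀ᵐ x ∂(volume.restrict Ω),
      ENNReal.ofReal (1 / c) ≤ φ n x 1 ∧ φ n x 1 ≤ ENNReal.ofReal c)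
    (haInc : ∀ n, ∀ᵐ x ∂(volume.restrict Ω), ∀ t, 0 ≤ t → ∀ l, 0 ≤ l → l ≤ 1 →
      φ n x (l * t) ≤ ENNReal.ofReal (L * l ^ p n) * φ n x t)
    (u : (Fin N → ℝ) → ℝ) (hu : Measurable u) :
    eLpNorm u ⊤ (volume.restrict Ω)
      ≤ Filter.liminf (fun n => luxNorm Ω (φ n) u) atTop := by
  refine le_of_forall_lt_imp_le_of_dense fun b hb => ?_
  rcases eq_or_ne b 0 with rfl | hb0
  · exact bot_le
  obtain ⟨t, -, hbt, htu⟩ := ENNReal.lt_iff_exists_real_btwn.mp hb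
  set r := b.toReal
  have hr : 0 < r := ENNReal.toReal_pos hb0 hb.ne_top
  have hrt : r < t := by
    rw [← ENNReal.ofReal_toReal hb.ne_top, ENNReal.ofReal_lt_ofReal_iff'] at hbt
    exact hbt.1
  have hL0 : 0 < L := by linarith
  have hc0 : ENNReal.ofReal (1 / c) ≠ 0 := (ENNReal.ofReal_pos.mpr (by positivity)).ne'
  have hgrowth := tendsto_ofReal_rpow_div_mul_atTop_top ((one_lt_div hr).mpr hrt) hptop hL0
    (mul_ne_zero hc0 (meas_le_abs_pos_of_lt_eLpNorm_top htu).ne')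
  rw [← ENNReal.ofReal_toReal hb.ne_top]
  refine le_liminf_of_le (by isBoundedDefault)
    ((hgrowth.eventually (lt_mem_nhds one_lt_top)).mono fun n hn => ?_)
  exact ofReal_le_luxNorm_of_one_lt (hφ n).1 (haInc n) ((hanch n).mono fun x hx => hx.1) hL0
    (by linarith [hp n]) hu hr hrt hn

/-- **Lower bound half of the norm limit.** Under the assumptions of the
norm-limit theorem (`|Ω| < ∞`, `1/c ≤ φ_n(x,1) ≤ c` a.e., `(aInc)_{p_n}` with uniform
constant `L`, `p_n → ∞`), for every `u ∈ L^∞(Ω)` one has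
`liminf_n ‖u‖_{φ_n} ≥ ‖u‖_∞`. -/
theorem luxNorm_liminf_ge {N : ℕ} (Ω : Set (Fin N → ℝ)) (hΩ : volume Ω < ⊤)
    (φ : ℕ → (Fin N → ℝ) → ℝ → ℝ≥0∞) (hφ : ∀ n, IsWeakPhi Ω (φ n))
    (c L : ℝ) (hc : 1 ≤ c) (hL : 1 ≤ L) (p : ℕ → ℝ) (hp : ∀ n, 1 ≤ p n)
    (hptop : Tendsto p atTop atTop)
    (hanch : ∀ n, ∀ᵐ x ∂(volume.restrict Ω),
      ENNReal.ofReal (1 / c) ≤ φ n x 1 ∧ φ n x 1 ≤ ENNReal.ofReal c)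
    (haInc : ∀ n, ∀ᵐ x ∂(volume.restrict Ω), ∀ t, 0 ≤ t → ∀ l, 0 ≤ l → l ≤ 1 →
      φ n x (l * t) ≤ ENNReal.ofReal (L * l ^ p n) * φ n x t)
    (u : (Fin N → ℝ) → ℝ) (hu : Measurable u)
    (huL : eLpNorm u ⊤ (volume.restrict Ω) < ⊤) :
    eLpNorm u ⊤ (volume.restrict Ω)
      ≤ Filter.liminf (fun n => luxNorm Ω (φ n) u) atTop :=
  luxNorm_liminf_ge_general Ω φ hφ c L hc hL p hp hptop hanch haInc u hu
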